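/- For fixed α ∈ [π/2, π), the function (β, γ) ↦ L(α) + L(β) + L(γ) subject to β, γ ≥ 0 and β + γ = π − α attains its maximum at β = γ = (π − α)/2; moreover the function α ↦ L(α) + 2L((π−α)/2) is maximized on [π/2, π) at α = π/2. -/

import Mathlib

/-!
Since `L' = -log |2 sin|` and `sin` increases on `[0, π/2]`, `L` is concave there; as
`β + γ = π - α ≤ π/2`, Jensen's inequality gives `L β + L γ ≤ 2 L ((β + γ)/2)`.
The derivative of `α ↦ L α + 2 L ((π - α)/2)` is `log |2 cos (α/2)| - log |2 sin α|
= -log |2 sin (α/2)|`, which is `≤ 0` once `α ≥ π/3`, so this function decreases on `[π/3, π]`.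
-/

open Real
noncomputable section

def lobachevsky (θ : ℝ) : ℝ := -∫ u in (0:ℝ)..θ, log |2 * sin u|

open MeasureTheory intervalIntegral Set

lemma intervalIntegrable_log_abs_two_mul_sin (a b : ℝ) :
    IntervalIntegrable (fun u => log |2 * sin u|) volume a b := by
  have hmero : MeromorphicOn (fun u => 2 * sin u) (uIcc a b) :=
    (analyticOnNhd_const.mul analyticOnNhd_sin).meromorphicOn
  simpa only [Function.comp_def, log_abs] using hmero.intervalIntegrable_log

lemma continuous_lobachevsky : Continuous lobachevsky :=
  (continuous_primitive (fun _ _ => intervalIntegrable_log_abs_two_mul_sin _ _) 0).neg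

lemma hasDerivAt_lobachevsky {θ : ℝ} (hθ : sin θ ≠ 0) :
    HasDerivAt lobachevsky (-log |2 * sin θ|) θ := by
  have hmeas : Measurable fun u => log |2 * sin u| := by fun_prop
  have hcont : ContinuousAt (fun u => log |2 * sin u|) θ :=
    (continuous_const.mul continuous_sin).abs.continuousAt.log (by simpa using hθ)
  exact (integral_hasDerivAt_right (intervalIntegrable_log_abs_two_mul_sin 0 θ)
    hmeas.stronglyMeasurable.stronglyMeasurableAtFilter hcont).neg

lemma concaveOn_lobachevsky : ConcaveOn ℝ (Icc 0 (π / 2)) lobachevsky := by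
  have hsin : ∀ θ ∈ Ioo 0 (π / 2), 0 < sin θ := fun θ hθ =>
    sin_pos_of_pos_of_lt_pi hθ.1 (by linarith [hθ.2, pi_pos])
  have hderiv : ∀ θ ∈ Ioo 0 (π / 2), deriv lobachevsky θ = -log (2 * sin θ) := fun θ hθ => by
    rw [(hasDerivAt_lobachevsky (hsin θ hθ).ne').deriv, abs_of_pos (by linarith [hsin θ hθ])]
  refine AntitoneOn.concaveOn_of_deriv (convex_Icc _ _) continuous_lobachevsky.continuousOn
    (fun θ hθ => ?_) (fun x hx y hy hxy => ?_) <;> rw [interior_Icc] at *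
  · exact (hasDerivAt_lobachevsky (hsin θ hθ).ne').differentiableAt.differentiableWithinAt
  · have hsin_le : sin x ≤ sin y :=
      sin_le_sin_of_le_of_le_pi_div_two (by linarith [hx.1, pi_pos]) hy.2.le hxy
    rw [hderiv x hx, hderiv y hy, neg_le_neg_iff]
    exact log_le_log (by linarith [hsin x hx]) (by linarith)

lemma lobachevsky_add_le_two_mul_half {β γ : ℝ} (hβ : β ∈ Icc 0 (π / 2))
    (hγ : γ ∈ Icc 0 (π / 2)) :
    lobachevsky β + lobachevsky γ ≤ 2 * lobachevsky ((β + γ) / 2) := by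
  have := concaveOn_lobachevsky.2 hβ hγ (by norm_num : (0:ℝ) ≤ 1 / 2)
    (by norm_num : (0:ℝ) ≤ 1 / 2) (by norm_num)
  rw [smul_eq_mul, smul_eq_mul, smul_eq_mul, smul_eq_mul,
    show 1 / 2 * β + 1 / 2 * γ = (β + γ) / 2 by ring] at this
  linarith

lemma sin_half_pi_sub_le_sin {α : ℝ} (h₁ : π / 3 ≤ α) (h₂ : α ≤ π) :
    sin ((π - α) / 2) ≤ sin α := by
  have hcos : 0 ≤ cos (α / 2) := cos_nonneg_of_mem_Icc ⟨by linarith [pi_pos], by linarith⟩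
  have hsin : 1 / 2 ≤ sin (α / 2) := by
    rw [← sin_pi_div_six]
    exact sin_le_sin_of_le_of_le_pi_div_two (by linarith [pi_pos]) (by linarith) (by linarith)
  rw [show (π - α) / 2 = π / 2 - α / 2 by ring, sin_pi_div_two_sub,
    show α = 2 * (α / 2) by ring, sin_two_mul, show 2 * (α / 2) / 2 = α / 2 by ring]
  nlinarith

lemma hasDerivAt_lobachevsky_add_two_mul_half {α : ℝ} (h₁ : sin α ≠ 0)
    (h₂ : sin ((π - α) / 2) ≠ 0) :
    HasDerivAt (fun α => lobachevsky α + 2 * lobachevsky ((π - α) / 2))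
      (log |2 * sin ((π - α) / 2)| - log |2 * sin α|) α := by
  have hsub : HasDerivAt (fun α : ℝ => (π - α) / 2) (-1 / 2) α := by
    simpa using ((hasDerivAt_id α).const_sub π).div_const 2
  refine ((hasDerivAt_lobachevsky h₁).add
    (((hasDerivAt_lobachevsky h₂).comp α hsub).const_mul 2)).congr_deriv ?_
  ring

lemma antitoneOn_lobachevsky_add_two_mul_half :
    AntitoneOn (fun α => lobachevsky α + 2 * lobachevsky ((π - α) / 2)) (Icc (π / 3) π) := by
  have hpos : ∀ α ∈ Ioo (π / 3) π, 0 < sin α ∧ 0 < sin ((π - α) / 2) := fun α hα =>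
    ⟨sin_pos_of_pos_of_lt_pi (by linarith [hα.1, pi_pos]) hα.2,
      sin_pos_of_pos_of_lt_pi (by linarith [hα.2]) (by linarith [hα.1, pi_pos])⟩
  refine antitoneOn_of_hasDerivWithinAt_nonpos (convex_Icc _ _)
    (f' := fun α => log |2 * sin ((π - α) / 2)| - log |2 * sin α|)
    (by have := continuous_lobachevsky; fun_prop) (fun α hα => ?_) (fun α hα => ?_) <;>
    rw [interior_Icc] at * <;> obtain ⟨hsin, hsin_half⟩ := hpos α hα
  · exact (hasDerivAt_lobachevsky_add_two_mul_half hsin.ne' hsin_half.ne').hasDerivWithinAt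
  · rw [sub_nonpos, abs_of_pos (by positivity), abs_of_pos (by positivity)]
    exact log_le_log (by positivity) (by linarith [sin_half_pi_sub_le_sin hα.1.le hα.2.le])

/-- For fixed `α ∈ [π/2, π)`, the function
`(β, γ) ↦ L(α) + L(β) + L(γ)` subject to `β, γ ≥ 0`, `β + γ = π - α` attains its maximum
at `β = γ = (π - α)/2`; moreover `α ↦ L(α) + 2·L((π - α)/2)` is maximized on `[π/2, π)`
at `α = π/2`. -/
theorem lobachevsky_maximization (α : ℝ) (hα₁ : π / 2 ≤ α) (hα₂ : α < π) :
    (∀ β γ : ℝ, 0 ≤ β → 0 ≤ γ → β + γ = π - α →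
        lobachevsky α + lobachevsky β + lobachevsky γ ≤
          lobachevsky α + 2 * lobachevsky ((π - α) / 2)) ∧
      lobachevsky α + 2 * lobachevsky ((π - α) / 2) ≤
        lobachevsky (π / 2) + 2 * lobachevsky (π / 4) := by
  refine ⟨fun β γ hβ hγ hsum => ?_, ?_⟩
  · have := lobachevsky_add_le_two_mul_half (β := β) (γ := γ) ⟨hβ, by linarith⟩ ⟨hγ, by linarith⟩
    rw [← hsum]
    linarith
  · have hπ := pi_pos
    have := antitoneOn_lobachevsky_add_two_mul_half ⟨by linarith, by linarith⟩
      ⟨by linarith, hα₂.le⟩ hα₁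
    dsimp only at this
    rwa [show (π - π / 2) / 2 = π / 4 by ring] at this

end
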